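/- arXiv:2209.03059 — 6 statements merged into one kernel-verified Lean document; each statement's English description precedes it below -/
import Mathlib

section
/- The formal power series y(x) = ∑_{n≥0} binomial(2n,n)^2 x^n over ℚ satisfies the linear differential equation (16x^2 − x)·y''(x) + (32x − 1)·y'(x) + 4·y(x) = 0. -/
open PowerSeries

theorem central_binomial_sq_gf_ode :
    let y : PowerSeries ℚ := PowerSeries.mk fun n => ((Nat.choose (2 * n) n : ℚ) ^ 2)
    (16 * X ^ 2 - X) * derivative ℚ (derivative ℚ y)
      + (32 * X - 1) * derivative ℚ y + 4 * y = 0 := by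
  intro y
  have key : ∀ n : ℕ, ((n : ℚ) + 1) ^ 2 * ((Nat.choose (2 * (n + 1)) (n + 1) : ℚ)) ^ 2
      = 4 * (2 * (n : ℚ) + 1) ^ 2 * ((Nat.choose (2 * n) n : ℚ)) ^ 2 := by
    intro n
    have h := Nat.succ_mul_centralBinom_succ n
    unfold Nat.centralBinom at h
    have hq : ((n : ℚ) + 1) * ((2 * (n + 1)).choose (n + 1) : ℚ)
        = 2 * (2 * (n : ℚ) + 1) * ((2 * n).choose n : ℚ) := by
      exact_mod_cast congrArg (Nat.cast (R := ℚ)) h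
    linear_combination (((n : ℚ) + 1) * ((2 * (n + 1)).choose (n + 1) : ℚ)
      + 2 * (2 * (n : ℚ) + 1) * ((2 * n).choose n : ℚ)) * hq
  set d1 := derivative ℚ y with hd1
  set d2 := derivative ℚ d1 with hd2
  have h1 : (16 * X ^ 2 - X) * d2 = X ^ 2 * (C 16 * d2) - X * d2 := by
    rw [show (C 16 : ℚ⟦X⟧) = 16 from map_ofNat _ 16]; ring
  have h2 : ((32 : ℚ⟦X⟧) * X - 1) * d1 = X * (C 32 * d1) - d1 := by
    rw [show (C 32 : ℚ⟦X⟧) = 32 from map_ofNat _ 32]; ring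
  have h3 : (4 : ℚ⟦X⟧) * y = C 4 * y := by
    rw [show (C 4 : ℚ⟦X⟧) = 4 from map_ofNat _ 4]
  ext n
  rw [h1, h2, h3]
  have hy : ∀ m : ℕ, coeff (R := ℚ) m y = ((2 * m).choose m : ℚ) ^ 2 := fun m => coeff_mk m _
  have hd1c : ∀ m : ℕ, coeff (R := ℚ) m d1 = ((2 * (m+1)).choose (m+1) : ℚ) ^ 2 * (m + 1) := by
    intro m; rw [hd1, coeff_derivative, hy]
  have hd2c : ∀ m : ℕ, coeff (R := ℚ) m d2 =
      ((2 * (m+2)).choose (m+2) : ℚ) ^ 2 * (m + 2) * (m + 1) := by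
    intro m; rw [hd2, coeff_derivative, hd1c]; push_cast; ring
  have z : ∀ f : ℚ⟦X⟧, coeff (R := ℚ) 0 (X * f) = 0 := by
    intro f; simp [coeff_zero_eq_constantCoeff]
  match n with
  | 0 =>
    have e2 : coeff (R := ℚ) 0 (X ^ 2 * (C 16 * d2)) = 0 := by
      rw [pow_two, mul_assoc, z]
    simp only [map_add, map_sub, map_zero, e2, z, coeff_C_mul, hy, hd1c, hd2c]
    norm_num
  | 1 =>
    have e2 : coeff (R := ℚ) 1 (X ^ 2 * (C 16 * d2)) = 0 := by
      rw [coeff_X_pow_mul']; norm_num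
    have e1 : coeff (R := ℚ) 1 (X * d2) = coeff (R := ℚ) 0 d2 := coeff_succ_X_mul _ _
    have e0 : coeff (R := ℚ) 1 (X * (C 32 * d1)) = 32 * coeff (R := ℚ) 0 d1 := by
      rw [coeff_succ_X_mul, coeff_C_mul]
    simp only [map_add, map_sub, map_zero, e2, e1, e0, coeff_C_mul, hy, hd1c, hd2c]
    have hk := key 1
    push_cast at hk ⊢
    nlinarith [hk]
  | (n+2) =>
    have e2 : coeff (R := ℚ) (n+2) (X ^ 2 * (C 16 * d2)) = 16 * coeff (R := ℚ) n d2 := by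
      rw [coeff_X_pow_mul, coeff_C_mul]
    have e1 : coeff (R := ℚ) (n+2) (X * d2) = coeff (R := ℚ) (n+1) d2 := coeff_succ_X_mul _ _
    have e0 : coeff (R := ℚ) (n+2) (X * (C 32 * d1)) = 32 * coeff (R := ℚ) (n+1) d1 := by
      rw [coeff_succ_X_mul, coeff_C_mul]
    simp only [map_add, map_sub, map_zero, e2, e1, e0, coeff_C_mul, hy, hd1c, hd2c]
    have hk := key (n+2)
    have hk1 := key (n+1)
    push_cast at hk hk1 ⊢
    nlinarith [hk, hk1]
end

section
/- If two sequences (u_n) and (v_n) of rational numbers are each P-recursive (i.e., each satisfies a linear recurrence with polynomial coefficients in n whose leading coefficient polynomial is nonzero), then the sequence (u_n + v_n) is P-recursive. -/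
open Finset

/-- A sequence `u : ℕ → ℚ` is P-recursive if it satisfies a linear recurrence
with polynomial coefficients whose leading coefficient polynomial is nonzero. -/
def PRecursive (u : ℕ → ℚ) : Prop :=
  ∃ (r : ℕ) (c : ℕ → Polynomial ℚ), c r ≠ 0 ∧
    ∀ n : ℕ, ∑ i ∈ Finset.range (r + 1), (c i).eval (n : ℚ) * u (n + i) = 0

open Polynomial

lemma shift_ne (D : Polynomial ℚ) (h : D ≠ 0) : D.comp (X + C 1) ≠ 0 := by
  rw [Ne, comp_X_add_C_eq_zero_iff]; exact h

lemma shift_eval (D : Polynomial ℚ) (n : ℕ) :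
    (D.comp (X + C 1)).eval (n : ℚ) = D.eval ((n + 1 : ℕ) : ℚ) := by
  push_cast; simp [Polynomial.eval_comp]

lemma reduce_one (u : ℕ → ℚ) (r : ℕ) (c : ℕ → Polynomial ℚ) (hc : c r ≠ 0)
    (hrec : ∀ n : ℕ, ∑ i ∈ Finset.range (r + 1), (c i).eval (n : ℚ) * u (n + i) = 0) :
    ∀ k : ℕ, ∃ D : Polynomial ℚ, D ≠ 0 ∧ ∃ a : ℕ → Polynomial ℚ,
      ∀ n : ℕ, D.eval (n : ℚ) * u (n + k) = ∑ i ∈ Finset.range r, (a i).eval (n : ℚ) * u (n + i) := by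
  have base : ∀ n : ℕ, (c r).eval (n : ℚ) * u (n + r)
      = -∑ i ∈ Finset.range r, (c i).eval (n : ℚ) * u (n + i) := by
    intro n
    have := hrec n
    rw [Finset.sum_range_succ] at this
    linarith
  intro k
  induction k with
  | zero =>
    rcases Nat.eq_zero_or_pos r with hr | hr
    · subst hr
      refine ⟨c 0, hc, 0, fun n => ?_⟩
      simpa using hrec n
    · refine ⟨1, one_ne_zero, fun i => if i = 0 then 1 else 0, fun n => ?_⟩
      rw [Finset.sum_eq_single 0]
      · simp
      · intro b _ hb; simp [hb]
      · intro h; exact absurd (Finset.mem_range.mpr hr) h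
  | succ k ih =>
    obtain ⟨D, hD, a, ha⟩ := ih
    set D' : Polynomial ℚ := D.comp (X + C 1) with hD'def
    have hD' : D' ≠ 0 := shift_ne D hD
    set a' : ℕ → Polynomial ℚ := fun i => (a i).comp (X + C 1) with ha'def
    have key : ∀ n : ℕ, D'.eval (n : ℚ) * u (n + (k + 1))
        = ∑ i ∈ Finset.range r, (a' i).eval (n : ℚ) * u ((n + 1) + i) := by
      intro n
      have e1 : n + (k + 1) = (n + 1) + k := by omega
      calc D'.eval (n : ℚ) * u (n + (k + 1))
          = D.eval (((n + 1 : ℕ)) : ℚ) * u ((n + 1) + k) := by rw [e1, hD'def, shift_eval]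
        _ = ∑ i ∈ Finset.range r, (a i).eval (((n + 1 : ℕ)) : ℚ) * u ((n + 1) + i) := ha (n + 1)
        _ = ∑ i ∈ Finset.range r, (a' i).eval (n : ℚ) * u ((n + 1) + i) :=
            Finset.sum_congr rfl fun i _ => by rw [ha'def]; rw [shift_eval]
    rcases Nat.eq_zero_or_pos r with hr | hr
    · subst hr
      exact ⟨D', hD', 0, fun n => by simpa using key n⟩
    · obtain ⟨r', rfl⟩ : ∃ r', r = r' + 1 := ⟨r - 1, by omega⟩
      refine ⟨c (r' + 1) * D', mul_ne_zero hc hD',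
        fun j => (if j = 0 then 0 else c (r' + 1) * a' (j - 1)) - a' r' * c j, fun n => ?_⟩
      have expand : (c (r' + 1) * D').eval (n : ℚ) * u (n + (k + 1))
          = ∑ i ∈ Finset.range r', (c (r' + 1) * a' i).eval (n : ℚ) * u (n + (i + 1))
            + (a' r').eval (n : ℚ) * ((c (r' + 1)).eval (n : ℚ) * u (n + (r' + 1))) := by
        rw [eval_mul, mul_assoc, key n, Finset.mul_sum, Finset.sum_range_succ]
        congr 1
        · refine Finset.sum_congr rfl fun i _ => ?_
          have : (n + 1) + i = n + (i + 1) := by omega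
          rw [this, eval_mul]; ring
        · have : (n + 1) + r' = n + (r' + 1) := by omega
          rw [this]; ring
      rw [expand, base n]
      have hT1 : ∑ j ∈ Finset.range (r' + 1),
          (if j = 0 then (0 : Polynomial ℚ) else c (r' + 1) * a' (j - 1)).eval (n : ℚ) * u (n + j)
          = ∑ i ∈ Finset.range r', (c (r' + 1) * a' i).eval (n : ℚ) * u (n + (i + 1)) := by
        rw [Finset.sum_range_succ']
        simp
      have hT2 : ∑ j ∈ Finset.range (r' + 1),
          (a' r' * c j).eval (n : ℚ) * u (n + j)
          = (a' r').eval (n : ℚ) * ∑ j ∈ Finset.range (r' + 1), (c j).eval (n : ℚ) * u (n + j) := by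
        rw [Finset.mul_sum]
        exact Finset.sum_congr rfl fun j _ => by rw [eval_mul]; ring
      simp only [eval_sub, sub_mul, Finset.sum_sub_distrib, hT1, hT2]
      ring

lemma reduce_common (u : ℕ → ℚ) (r : ℕ) (c : ℕ → Polynomial ℚ) (hc : c r ≠ 0)
    (hrec : ∀ n : ℕ, ∑ i ∈ Finset.range (r + 1), (c i).eval (n : ℚ) * u (n + i) = 0)
    (t : ℕ) :
    ∃ D : Polynomial ℚ, D ≠ 0 ∧ ∃ A : ℕ → ℕ → Polynomial ℚ,
      ∀ k ≤ t, ∀ n : ℕ, D.eval (n : ℚ) * u (n + k)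
        = ∑ i ∈ Finset.range r, (A k i).eval (n : ℚ) * u (n + i) := by
  choose Du hDu a ha using reduce_one u r c hc hrec
  refine ⟨∏ j ∈ Finset.range (t + 1), Du j, Finset.prod_ne_zero_iff.mpr (fun j _ => hDu j),
    fun k i => (∏ j ∈ (Finset.range (t + 1)).erase k, Du j) * a k i, fun k hk n => ?_⟩
  have hmem : k ∈ Finset.range (t + 1) := Finset.mem_range.mpr (by omega)
  rw [← Finset.mul_prod_erase _ _ hmem, eval_mul,
    mul_comm ((Du k).eval (n : ℚ)) (eval (n : ℚ) (∏ x ∈ (Finset.range (t+1)).erase k, Du x)),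
    mul_assoc, ha k n, Finset.mul_sum]
  exact Finset.sum_congr rfl fun i _ => by rw [eval_mul]; ring

set_option maxHeartbeats 1000000 in
set_option synthInstance.maxHeartbeats 200000 in
lemma poly_dep {ι : Type*} [Fintype ι] (t : ℕ) (ht : Fintype.card ι < t)
    (w : Fin t → ι → Polynomial ℚ) :
    ∃ e : Fin t → Polynomial ℚ, (∃ k, e k ≠ 0) ∧ ∀ x : ι, ∑ k, e k * w k x = 0 := by
  let φ : Polynomial ℚ →+* RatFunc ℚ := algebraMap (Polynomial ℚ) (RatFunc ℚ)
  have hinj : Function.Injective φ := IsFractionRing.injective _ _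
  let v : Fin t → (ι → RatFunc ℚ) := fun k x => φ (w k x)
  have hnli : ¬ LinearIndependent (RatFunc ℚ) v := by
    intro hli
    have := hli.fintype_card_le_finrank
    rw [Module.finrank_pi, Fintype.card_fin] at this
    omega
  obtain ⟨g, hg0, k0, hk0⟩ := Fintype.not_linearIndependent_iff.mp hnli
  obtain ⟨b, hb⟩ := IsLocalization.exist_integer_multiples
    (nonZeroDivisors (Polynomial ℚ)) Finset.univ g
  choose e he using fun k => hb k (Finset.mem_univ k)
  have hbne : φ (b : Polynomial ℚ) ≠ 0 := fun h =>
    nonZeroDivisors.ne_zero b.2 (hinj (by simpa using h))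
  refine ⟨e, ⟨k0, fun h => hk0 ?_⟩, fun x => ?_⟩
  · have h2 : φ (e k0) = (b : Polynomial ℚ) • g k0 := he k0
    rw [h, map_zero, Algebra.smul_def] at h2
    rcases mul_eq_zero.mp h2.symm with h' | h'
    · exact absurd h' hbne
    · exact h'
  · apply hinj
    rw [map_sum, map_zero]
    have hterm : ∀ k, φ (e k * w k x) = φ (b : Polynomial ℚ) * (g k * v k x) := by
      intro k
      rw [map_mul, he k, Algebra.smul_def]
      ring
    rw [Finset.sum_congr rfl (fun k _ => hterm k), ← Finset.mul_sum]
    have hzero : ∑ k, g k * v k x = 0 := by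
      have h1 : (∑ k, g k • v k) x = 0 := by rw [hg0]; rfl
      rw [Finset.sum_apply] at h1
      simpa [smul_eq_mul] using h1
    rw [hzero, mul_zero]

theorem pRecursive_add (u v : ℕ → ℚ) (hu : PRecursive u) (hv : PRecursive v) :
    PRecursive (fun n => u n + v n) := by
  obtain ⟨r, cu, hcu, hru⟩ := hu
  obtain ⟨s, cv, hcv, hrv⟩ := hv
  set t := r + s with ht
  obtain ⟨Du, hDu, A, hA⟩ := reduce_common u r cu hcu hru t
  obtain ⟨Dv, hDv, B, hB⟩ := reduce_common v s cv hcv hrv t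
  set D := Du * Dv with hDdef
  have hD : D ≠ 0 := mul_ne_zero hDu hDv
  -- the combined reduction
  have hred : ∀ k ≤ t, ∀ n : ℕ, D.eval (n : ℚ) * (u (n + k) + v (n + k))
      = ∑ i ∈ Finset.range r, (Dv * A k i).eval (n : ℚ) * u (n + i)
        + ∑ j ∈ Finset.range s, (Du * B k j).eval (n : ℚ) * v (n + j) := by
    intro k hk n
    rw [hDdef, eval_mul, mul_add]
    congr 1
    · rw [mul_comm (Du.eval _) (Dv.eval _), mul_assoc, hA k hk n, Finset.mul_sum]
      exact Finset.sum_congr rfl fun i _ => by rw [eval_mul]; ring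
    · rw [mul_assoc, hB k hk n, Finset.mul_sum]
      exact Finset.sum_congr rfl fun j _ => by rw [eval_mul]; ring
  -- linear dependence
  set w : Fin (t + 1) → (Fin r ⊕ Fin s) → Polynomial ℚ :=
    fun k => Sum.elim (fun i => Dv * A (↑k) (↑i)) (fun j => Du * B (↑k) (↑j)) with hw
  obtain ⟨e, ⟨k0, hk0⟩, hdep⟩ := poly_dep (t + 1) (by simp [ht]) w
  -- the maximal nonzero index
  set T : Finset (Fin (t + 1)) := Finset.univ.filter (fun k => e k ≠ 0) with hT
  have hTne : T.Nonempty := ⟨k0, by simp [hT, hk0]⟩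
  set m := T.max' hTne with hm
  have hem : e m ≠ 0 := by
    have h2 : m ∈ T := T.max'_mem hTne
    simp only [hT, Finset.mem_filter] at h2
    exact h2.2
  have hmax : ∀ k : Fin (t + 1), e k ≠ 0 → k ≤ m := fun k hk =>
    T.le_max' k (by simp [hT, hk])
  -- the coefficients
  set cc : ℕ → Polynomial ℚ := fun k => if h : k < t + 1 then e ⟨k, h⟩ * D else 0 with hcc
  have hccm : cc (↑m) = e m * D := by
    rw [hcc]
    simp only [dif_pos m.isLt, Fin.eta]
  refine ⟨↑m, cc, by rw [hccm]; exact mul_ne_zero hem hD, fun n => ?_⟩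
  -- extend sum to range (t+1)
  have hsub : ∑ k ∈ Finset.range ((↑m : ℕ) + 1), (cc k).eval (n : ℚ) * (u (n + k) + v (n + k))
      = ∑ k ∈ Finset.range (t + 1), (cc k).eval (n : ℚ) * (u (n + k) + v (n + k)) := by
    apply Finset.sum_subset
    · intro x hx
      rw [Finset.mem_range] at *
      have := m.isLt
      omega
    · intro x hx hnx
      rw [Finset.mem_range] at hx
      rw [Finset.mem_range, not_lt] at hnx
      have hex : e ⟨x, hx⟩ = 0 := by
        by_contra hne
        have := hmax ⟨x, hx⟩ hne
        rw [Fin.le_def] at this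
        simp only at this
        omega
      rw [hcc]
      simp [dif_pos hx, hex]
  show ∑ k ∈ Finset.range ((↑m : ℕ) + 1), (cc k).eval (n : ℚ) * ((fun n => u n + v n) (n + k)) = 0
  simp only []
  rw [hsub, ← Fin.sum_univ_eq_sum_range
    (fun k => (cc k).eval (n : ℚ) * (u (n + k) + v (n + k))) (t + 1)]
  have hterm : ∀ k : Fin (t + 1), (cc ↑k).eval (n : ℚ) * (u (n + ↑k) + v (n + ↑k))
      = ∑ i ∈ Finset.range r, (e k * (Dv * A (↑k) i)).eval (n : ℚ) * u (n + i)
        + ∑ j ∈ Finset.range s, (e k * (Du * B (↑k) j)).eval (n : ℚ) * v (n + j) := by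
    intro k
    have h1 : cc ↑k = e k * D := by rw [hcc]; simp only [dif_pos k.isLt, Fin.eta]
    rw [h1, eval_mul, mul_assoc, hred ↑k (by omega) n, mul_add, Finset.mul_sum, Finset.mul_sum]
    congr 1
    · exact Finset.sum_congr rfl fun i _ => by simp only [eval_mul]; ring
    · exact Finset.sum_congr rfl fun j _ => by simp only [eval_mul]; ring
  have c1 : ∑ k : Fin (t + 1), ∑ i ∈ Finset.range r,
      (e k * (Dv * A (↑k) i)).eval (n : ℚ) * u (n + i)
      = ∑ i ∈ Finset.range r, ∑ k : Fin (t + 1),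
      (e k * (Dv * A (↑k) i)).eval (n : ℚ) * u (n + i) := Finset.sum_comm
  have c2 : ∑ k : Fin (t + 1), ∑ j ∈ Finset.range s,
      (e k * (Du * B (↑k) j)).eval (n : ℚ) * v (n + j)
      = ∑ j ∈ Finset.range s, ∑ k : Fin (t + 1),
      (e k * (Du * B (↑k) j)).eval (n : ℚ) * v (n + j) := Finset.sum_comm
  rw [Finset.sum_congr rfl (fun k _ => hterm k), Finset.sum_add_distrib, c1, c2]
  have hz1 : ∀ i ∈ Finset.range r,
      ∑ k : Fin (t + 1), (e k * (Dv * A (↑k) i)).eval (n : ℚ) * u (n + i) = 0 := by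
    intro i hi
    rw [Finset.mem_range] at hi
    have := hdep (Sum.inl ⟨i, hi⟩)
    rw [← Finset.sum_mul, ← Polynomial.eval_finset_sum]
    rw [hw] at this
    simp only [Sum.elim_inl] at this
    rw [this]
    simp
  have hz2 : ∀ j ∈ Finset.range s,
      ∑ k : Fin (t + 1), (e k * (Du * B (↑k) j)).eval (n : ℚ) * v (n + j) = 0 := by
    intro j hj
    rw [Finset.mem_range] at hj
    have := hdep (Sum.inr ⟨j, hj⟩)
    rw [← Finset.sum_mul, ← Polynomial.eval_finset_sum]
    rw [hw] at this
    simp only [Sum.elim_inr] at this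
    rw [this]
    simp
  rw [Finset.sum_congr rfl hz1, Finset.sum_congr rfl hz2]
  simp
end

section
/- A sequence (u_n) of rational numbers is P-recursive if and only if its generating function ∑_{n≥0} u_n x^n ∈ ℚ[[x]] is D-finite. -/
open PowerSeries

/-- A formal power series `f ∈ ℚ[[x]]` is D-finite. -/
def DFinitePS (f : PowerSeries ℚ) : Prop :=
  ∃ (s : ℕ) (p : ℕ → Polynomial ℚ), p s ≠ 0 ∧
    ∑ i ∈ Finset.range (s + 1), ((p i : PowerSeries ℚ)) * ((derivative ℚ)^[i] f) = 0

open Finset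

noncomputable section

lemma coeff_iter_deriv (u : ℕ → ℚ) (i : ℕ) : ∀ (n : ℕ),
    PowerSeries.coeff n ((derivative ℚ)^[i] (PowerSeries.mk u)) =
    (∏ t ∈ Finset.range i, ((n : ℚ) + t + 1)) * u (n + i) := by
  induction i generalizing u with
  | zero => intro n; simp
  | succ i ih =>
    intro n
    rw [Function.iterate_succ_apply]
    have h1 : (derivative ℚ) (PowerSeries.mk u) = PowerSeries.mk (fun m => u (m+1) * (m+1)) := by
      ext m
      simp [PowerSeries.coeff_derivative]
    rw [h1, ih]
    rw [Finset.prod_range_succ]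
    push_cast
    ring_nf

/-- multiply the n-th coefficient by c(n) -/
def aT (c : Polynomial ℚ) (g : PowerSeries ℚ) : PowerSeries ℚ :=
  PowerSeries.mk fun n => c.eval (n : ℚ) * PowerSeries.coeff n g

@[simp] lemma coeff_aT (c : Polynomial ℚ) (g : PowerSeries ℚ) (n : ℕ) :
    PowerSeries.coeff n (aT c g) = c.eval (n : ℚ) * PowerSeries.coeff n g := by
  simp [aT]

lemma aT_mul (c₁ c₂ : Polynomial ℚ) (g : PowerSeries ℚ) :
    aT (c₁ * c₂) g = aT c₁ (aT c₂ g) := by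
  ext n; simp; ring

lemma aT_X (g : PowerSeries ℚ) :
    aT Polynomial.X g = (PowerSeries.X : PowerSeries ℚ) * (derivative ℚ) g := by
  ext n
  cases n with
  | zero => simp
  | succ m =>
    rw [PowerSeries.coeff_succ_X_mul, PowerSeries.coeff_derivative]
    simp
    ring

def St : ℕ → ℕ → ℚ
  | 0, 0 => 1
  | 0, _+1 => 0
  | _+1, 0 => 0
  | k+1, j+1 => (j+1 : ℚ) * St k (j+1) + St k j

lemma St_gt : ∀ k j, k < j → St k j = 0 := by
  intro k
  induction k with
  | zero => intro j hj; cases j with | zero => omega | succ m => rfl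
  | succ k ih =>
    intro j hj
    cases j with
    | zero => omega
    | succ m =>
      show (m+1 : ℚ) * St k (m+1) + St k m = 0
      rw [ih (m+1) (by omega), ih m (by omega)]
      ring

lemma St_self : ∀ k, St k k = 1 := by
  intro k
  induction k with
  | zero => rfl
  | succ k ih =>
    show (k+1 : ℚ) * St k (k+1) + St k k = 1
    rw [St_gt k (k+1) (by omega), ih]; ring

lemma St_zero_zero : St 0 0 = 1 := rfl
lemma St_succ_zero (k : ℕ) : St (k+1) 0 = 0 := rfl
lemma St_succ_succ (k j : ℕ) : St (k+1) (j+1) = (j+1 : ℚ) * St k (j+1) + St k j := rfl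

lemma key_step (j : ℕ) (h : PowerSeries ℚ) :
    (PowerSeries.X : PowerSeries ℚ) * (derivative ℚ) ((PowerSeries.X : PowerSeries ℚ)^j * h) =
      (j : ℚ) • ((PowerSeries.X : PowerSeries ℚ)^j * h)
        + (PowerSeries.X : PowerSeries ℚ)^(j+1) * (derivative ℚ) h := by
  cases j with
  | zero => simp
  | succ i =>
    rw [Derivation.leibniz, Derivation.leibniz_pow, PowerSeries.derivative_X]
    rw [smul_eq_mul, smul_eq_mul, smul_eq_mul]
    rw [nsmul_eq_mul]
    push_cast
    rw [PowerSeries.smul_eq_C_mul, map_add, map_natCast, map_one]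
    ring

lemma aT_pow (k : ℕ) (g : PowerSeries ℚ) :
    aT (Polynomial.X^k) g
      = ∑ j ∈ range (k+1),
          St k j • ((PowerSeries.X : PowerSeries ℚ)^j * (derivative ℚ)^[j] g) := by
  induction k generalizing g with
  | zero =>
    rw [pow_zero]
    ext n
    simp [aT, St_zero_zero]
  | succ k ih =>
    set T : ℕ → PowerSeries ℚ :=
      fun j => (PowerSeries.X : PowerSeries ℚ)^j * (derivative ℚ)^[j] g with hT
    have hcalc : aT (Polynomial.X^(k+1)) g
        = ∑ j ∈ range (k+1), ((St k j * j) • T j + St k j • T (j+1)) := by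
      rw [pow_succ', aT_mul, aT_X, ih, map_sum, Finset.mul_sum]
      refine Finset.sum_congr rfl fun j _ => ?_
      rw [Derivation.map_smul, mul_smul_comm, key_step, smul_add, smul_smul, mul_comm (St k j) (j:ℚ)]
      rw [hT]
      simp only [Function.iterate_succ_apply']
    rw [hcalc, Finset.sum_add_distrib]
    have h0 : ∑ j ∈ range (k+1+1), St (k+1) j • T j
        = (∑ j ∈ range (k+1), St (k+1) (j+1) • T (j+1)) + St (k+1) 0 • T 0 :=
      Finset.sum_range_succ' _ _
    rw [h0, St_succ_zero, zero_smul, add_zero]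
    have h1 : ∀ j ∈ range (k+1), St (k+1) (j+1) • T (j+1)
        = ((j+1 : ℚ) * St k (j+1)) • T (j+1) + St k j • T (j+1) := by
      intro j _
      rw [St_succ_succ, add_smul]
    rw [Finset.sum_congr rfl h1, Finset.sum_add_distrib]
    congr 1
    -- ∑ (St k j * j) • T j = ∑ ((j+1) * St k (j+1)) • T (j+1)
    have h2 : ∑ j ∈ range (k+1+1), (St k j * j) • T j
        = (∑ j ∈ range (k+1), (St k (j+1) * (j+1:ℕ)) • T (j+1)) + (St k 0 * (0:ℕ)) • T 0 :=
      Finset.sum_range_succ' _ _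
    have h3 : ∑ j ∈ range (k+1+1), (St k j * j) • T j
        = (∑ j ∈ range (k+1), (St k j * j) • T j) + (St k (k+1) * ((k+1:ℕ):ℚ)) • T (k+1) :=
      Finset.sum_range_succ _ _
    rw [St_gt k (k+1) (by omega)] at h3
    simp only [Nat.cast_zero, mul_zero, zero_mul, zero_smul, add_zero] at h2 h3
    rw [← h3, h2]
    refine Finset.sum_congr rfl fun j _ => ?_
    rw [mul_comm (St k (j+1))]
    push_cast
    ring_nf

def dd (c : Polynomial ℚ) (j : ℕ) : ℚ := ∑ k ∈ range (c.natDegree + 1), c.coeff k * St k j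

lemma aT_eq (c : Polynomial ℚ) (g : PowerSeries ℚ) (N : ℕ) (hN : c.natDegree ≤ N) :
    aT c g = ∑ j ∈ range (N+1),
      dd c j • ((PowerSeries.X : PowerSeries ℚ)^j * (derivative ℚ)^[j] g) := by
  have h1 : aT c g = ∑ k ∈ range (c.natDegree + 1), c.coeff k • aT (Polynomial.X^k) g := by
    ext n
    rw [map_sum]
    simp only [map_smul, coeff_aT, smul_eq_mul, Polynomial.eval_pow, Polynomial.eval_X]
    simp_rw [← mul_assoc]
    rw [← Finset.sum_mul]
    congr 1
    rw [Polynomial.eval_eq_sum_range]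
  rw [h1]
  have h2 : ∀ k ∈ range (c.natDegree+1), c.coeff k • aT (Polynomial.X^k) g
      = ∑ j ∈ range (N+1),
          (c.coeff k * St k j) • ((PowerSeries.X : PowerSeries ℚ)^j * (derivative ℚ)^[j] g) := by
    intro k hk
    rw [aT_pow, Finset.smul_sum]
    simp_rw [smul_smul]
    apply Finset.sum_subset (Finset.range_subset_range.2 (by simp at hk; omega))
    intro j _ hj
    rw [St_gt k j (by simp at hj ⊢; omega), mul_zero, zero_smul]
  rw [Finset.sum_congr rfl h2, Finset.sum_comm]
  refine Finset.sum_congr rfl fun j _ => ?_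
  rw [dd, Finset.sum_smul]

lemma dd_natDegree (c : Polynomial ℚ) : dd c c.natDegree = c.leadingCoeff := by
  rw [dd, Finset.sum_eq_single_of_mem c.natDegree (Finset.self_mem_range_succ _)]
  · rw [St_self, mul_one, Polynomial.leadingCoeff]
  · intro k hk hne
    rw [St_gt k c.natDegree (by simp at hk; omega), mul_zero]

lemma coeff_coe_mul (p : Polynomial ℚ) (g : PowerSeries ℚ) (d n : ℕ) (h : p.natDegree ≤ d) :
    PowerSeries.coeff (n + d) ((p : PowerSeries ℚ) * g)
      = ∑ j ∈ range (d+1), p.coeff j * PowerSeries.coeff (n + d - j) g := by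
  rw [PowerSeries.coeff_mul]
  rw [Finset.Nat.sum_antidiagonal_eq_sum_range_succ
    (f := fun a b => PowerSeries.coeff a (p : PowerSeries ℚ) * PowerSeries.coeff b g)]
  rw [eq_comm]
  simp only [Polynomial.coeff_coe]
  rw [Nat.succ_eq_add_one]
  apply Finset.sum_subset (Finset.range_subset_range.2 (by omega))
  intro j hj hj2
  rw [Polynomial.coeff_eq_zero_of_natDegree_lt, zero_mul]
  simp only [Finset.mem_range] at hj hj2
  omega

theorem forward (u : ℕ → ℚ) (r : ℕ) (c : ℕ → Polynomial ℚ) (hc : c r ≠ 0)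
    (hrec : ∀ n : ℕ, ∑ i ∈ Finset.range (r + 1), (c i).eval (n : ℚ) * u (n + i) = 0) :
    DFinitePS (PowerSeries.mk u) := by
  set f := PowerSeries.mk u with hf
  set e : Polynomial ℚ := ∏ t ∈ range r, (Polynomial.X + Polynomial.C (t+1 : ℚ)) with he
  have he_monic : e.Monic := Polynomial.monic_prod_of_monic _ _
    (fun t _ => Polynomial.monic_X_add_C _)
  set cc : ℕ → Polynomial ℚ := fun i => e * c i with hcc
  set ch : ℕ → Polynomial ℚ :=
    fun i => (cc i).comp (Polynomial.X - Polynomial.C (i : ℚ)) with hch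
  -- F1
  have F1 : ∀ i ∈ range (r+1), aT (ch i) f
      = (PowerSeries.X : PowerSeries ℚ)^i * aT (cc i) (PowerSeries.mk fun n => u (n + i)) := by
    intro i hi
    rw [Finset.mem_range] at hi
    ext n
    rw [PowerSeries.coeff_X_pow_mul']
    split_ifs with hin
    · rw [coeff_aT, coeff_aT, PowerSeries.coeff_mk, hch]
      simp only []
      rw [Polynomial.eval_comp]
      rw [PowerSeries.coeff_mk]  -- coeff n f = u n ; f = mk u
      congr 2
      · simp [Nat.cast_sub hin]
      · omega
    · -- n < i : lhs is zero since e vanishes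
      rw [coeff_aT, hch]
      simp only []
      rw [Polynomial.eval_comp, hcc]
      simp only [Polynomial.eval_mul]
      have : Polynomial.eval (Polynomial.eval (↑n) (Polynomial.X - Polynomial.C (i:ℚ))) e = 0 := by
        rw [he]
        simp only [Polynomial.eval_prod]
        apply Finset.prod_eq_zero (Finset.mem_range.2 (show i - n - 1 < r by omega))
        simp only [Polynomial.eval_add, Polynomial.eval_X, Polynomial.eval_C,
          Polynomial.eval_sub]
        have : ((i - n - 1 : ℕ) : ℚ) = (i : ℚ) - n - 1 := by
          rw [Nat.sub_sub, Nat.cast_sub (by omega : n + 1 ≤ i)]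
          push_cast; ring
        rw [this]; ring
      rw [this, zero_mul, zero_mul]
  -- sum is zero
  have Fsum : ∑ i ∈ range (r+1), aT (cc i) (PowerSeries.mk fun n => u (n + i)) = 0 := by
    ext n
    rw [map_sum, map_zero]
    have : ∀ i ∈ range (r+1),
        PowerSeries.coeff n (aT (cc i) (PowerSeries.mk fun m => u (m + i)))
        = e.eval (n:ℚ) * ((c i).eval (n:ℚ) * u (n+i)) := by
      intro i _
      rw [coeff_aT, PowerSeries.coeff_mk, hcc]
      simp only [Polynomial.eval_mul]
      ring
    rw [Finset.sum_congr rfl this, ← Finset.mul_sum, hrec, mul_zero]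
  -- max degree
  set N : ℕ := (range (r+1)).sup (fun i => (ch i).natDegree) with hN
  have hdegle : ∀ i ∈ range (r+1), (ch i).natDegree ≤ N :=
    fun i hi => Finset.le_sup (f := fun i => (ch i).natDegree) hi
  -- the differential equation polynomials
  set p : ℕ → Polynomial ℚ := fun j => ∑ i ∈ range (r+1),
    Polynomial.C (dd (ch i) j) * Polynomial.X ^ (r - i + j) with hp
  refine ⟨N, p, ?_, ?_⟩
  · -- p N ≠ 0
    have hchr : ch r ≠ 0 := by
      intro h0
      apply hc
      have : cc r = (ch r).comp (Polynomial.X + Polynomial.C (r : ℚ)) := by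
        rw [hch]
        simp only []
        rw [Polynomial.comp_assoc]
        simp [Polynomial.sub_comp]
      rw [h0, Polynomial.zero_comp] at this
      rcases mul_eq_zero.1 this with h | h
      · exact absurd h he_monic.ne_zero
      · exact h
    obtain ⟨i₀, hi₀mem, hi₀ne, hi₀deg⟩ :
        ∃ i₀ ∈ range (r+1), ch i₀ ≠ 0 ∧ (ch i₀).natDegree = N := by
      obtain ⟨i₁, hi₁, hg⟩ := Finset.exists_mem_eq_sup (range (r+1)) ⟨0, by simp⟩
        (fun i => (ch i).natDegree)
      by_cases h1 : ch i₁ ≠ 0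
      · exact ⟨i₁, hi₁, h1, hg.symm⟩
      · push_neg at h1
        have hN0 : N = 0 := by rw [hN, hg, h1]; simp
        exact ⟨r, Finset.self_mem_range_succ r, hchr,
          le_antisymm (hN0 ▸ hdegle r (Finset.self_mem_range_succ r)) (Nat.zero_le _) |>.trans hN0.symm ▸ rfl⟩
    intro hPN
    have : (p N).coeff (r - i₀ + N) = dd (ch i₀) N := by
      rw [hp]
      simp only [Polynomial.finset_sum_coeff, Polynomial.coeff_C_mul, Polynomial.coeff_X_pow]
      rw [Finset.sum_eq_single_of_mem i₀ hi₀mem]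
      · simp
      · intro i hi hne
        rw [if_neg, mul_zero]
        rw [Finset.mem_range] at hi hi₀mem
        omega
    rw [hPN, Polynomial.coeff_zero] at this
    rw [← hi₀deg] at this
    rw [dd_natDegree] at this
    exact hi₀ne (Polynomial.leadingCoeff_eq_zero.1 this.symm)
  · -- the equation
    calc ∑ j ∈ range (N+1), ((p j : Polynomial ℚ) : PowerSeries ℚ) * (derivative ℚ)^[j] f
        = ∑ j ∈ range (N+1), ∑ i ∈ range (r+1),
            dd (ch i) j • ((PowerSeries.X:PowerSeries ℚ)^(r-i) *
              ((PowerSeries.X:PowerSeries ℚ)^j * (derivative ℚ)^[j] f)) := by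
          refine Finset.sum_congr rfl fun j _ => ?_
          rw [hp]
          simp only []
          rw [← Polynomial.coeToPowerSeries.ringHom_apply, map_sum, Finset.sum_mul]
          refine Finset.sum_congr rfl fun i _ => ?_
          rw [map_mul, map_pow]
          simp only [Polynomial.coeToPowerSeries.ringHom_apply, Polynomial.coe_C,
            Polynomial.coe_X]
          rw [PowerSeries.smul_eq_C_mul, pow_add]
          ring
      _ = ∑ i ∈ range (r+1), (PowerSeries.X:PowerSeries ℚ)^(r-i) *
            ∑ j ∈ range (N+1), dd (ch i) j •
              ((PowerSeries.X:PowerSeries ℚ)^j * (derivative ℚ)^[j] f) := by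
          rw [Finset.sum_comm]
          refine Finset.sum_congr rfl fun i _ => ?_
          rw [Finset.mul_sum]
          refine Finset.sum_congr rfl fun j _ => ?_
          rw [mul_smul_comm]
      _ = ∑ i ∈ range (r+1), (PowerSeries.X:PowerSeries ℚ)^(r-i) * aT (ch i) f := by
          refine Finset.sum_congr rfl fun i hi => ?_
          rw [aT_eq (ch i) f N (hdegle i hi)]
      _ = ∑ i ∈ range (r+1), (PowerSeries.X:PowerSeries ℚ)^r *
            aT (cc i) (PowerSeries.mk fun n => u (n + i)) := by
          refine Finset.sum_congr rfl fun i hi => ?_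
          rw [F1 i hi, ← mul_assoc, ← pow_add]
          rw [Finset.mem_range] at hi
          congr 2
          omega
      _ = 0 := by rw [← Finset.mul_sum, Fsum, mul_zero]

theorem backward (u : ℕ → ℚ) (s : ℕ) (p : ℕ → Polynomial ℚ) (hps : p s ≠ 0)
    (heq : ∑ i ∈ Finset.range (s + 1),
      ((p i : PowerSeries ℚ)) * ((derivative ℚ)^[i] (PowerSeries.mk u)) = 0) :
    PRecursive u := by
  classical
  set d : ℕ := (range (s+1)).sup (fun i => (p i).natDegree) with hd
  have hdegle : ∀ i ∈ range (s+1), (p i).natDegree ≤ d :=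
    fun i hi => Finset.le_sup (f := fun i => (p i).natDegree) hi
  set Pl : ℕ → ℚ → Polynomial ℚ :=
    fun i a => ∏ t ∈ range i, (Polynomial.X + Polynomial.C (a + t + 1)) with hPl
  have hPl_monic : ∀ i a, (Pl i a).Monic :=
    fun i a => Polynomial.monic_prod_of_monic _ _ (fun t _ => Polynomial.monic_X_add_C _)
  have hPl_deg : ∀ i a, (Pl i a).natDegree = i := by
    intro i a
    rw [hPl]
    simp only []
    rw [Polynomial.natDegree_prod_of_monic _ _ (fun t _ => Polynomial.monic_X_add_C _)]
    simp only [Polynomial.natDegree_X_add_C, Finset.sum_const, smul_eq_mul, mul_one,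
      Finset.card_range]
  have hPl_eval : ∀ i a (x : ℚ), (Pl i a).eval x = ∏ t ∈ range i, (x + a + t + 1) := by
    intro i a x
    rw [hPl]
    simp only [Polynomial.eval_prod, Polynomial.eval_add, Polynomial.eval_X, Polynomial.eval_C]
    refine Finset.prod_congr rfl fun t _ => by ring
  set C' : ℕ → Polynomial ℚ := fun k => ∑ i ∈ range (s+1), ∑ j ∈ range (d+1),
    if i + (d - j) = k then Polynomial.C ((p i).coeff j) * Pl i ((d:ℚ) - j) else 0 with hC'
  -- main recurrence identity on the full range
  have main : ∀ m : ℕ, ∑ k ∈ range (s+d+1), (C' k).eval (m:ℚ) * u (m+k) = 0 := by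
    intro m
    have h0 : PowerSeries.coeff (m + d) (∑ i ∈ Finset.range (s + 1),
        ((p i : PowerSeries ℚ)) * ((derivative ℚ)^[i] (PowerSeries.mk u))) = 0 := by
      rw [heq, map_zero]
    rw [map_sum] at h0
    have h1 : ∀ i ∈ range (s+1),
        PowerSeries.coeff (m + d) ((p i : PowerSeries ℚ) * ((derivative ℚ)^[i] (PowerSeries.mk u)))
        = ∑ j ∈ range (d+1), (p i).coeff j *
            ((∏ t ∈ range i, (((m + (d - j) : ℕ) : ℚ) + t + 1)) * u ((m + (d - j)) + i)) := by
      intro i hi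
      rw [coeff_coe_mul _ _ _ _ (hdegle i hi)]
      refine Finset.sum_congr rfl fun j hj => ?_
      simp only [Finset.mem_range] at hj
      have hmd : m + d - j = m + (d - j) := by omega
      rw [hmd, coeff_iter_deriv]
    rw [Finset.sum_congr rfl h1] at h0
    rw [← h0]
    -- now transform the C' sum into the double sum
    have h2 : ∀ k ∈ range (s+d+1), (C' k).eval (m:ℚ) * u (m+k)
        = ∑ i ∈ range (s+1), ∑ j ∈ range (d+1),
            (if i + (d - j) = k then
              ((p i).coeff j * (Pl i ((d:ℚ) - j)).eval (m:ℚ)) * u (m+k) else 0) := by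
      intro k _
      rw [hC']
      simp only [Polynomial.eval_finset_sum]
      rw [Finset.sum_mul]
      refine Finset.sum_congr rfl fun i _ => ?_
      rw [Finset.sum_mul]
      refine Finset.sum_congr rfl fun j _ => ?_
      split_ifs with hcon
      · rw [Polynomial.eval_mul, Polynomial.eval_C]
      · rw [Polynomial.eval_zero, zero_mul]
    rw [Finset.sum_congr rfl h2, Finset.sum_comm]
    refine Finset.sum_congr rfl fun i hi => ?_
    rw [Finset.sum_comm]
    refine Finset.sum_congr rfl fun j hj => ?_
    have hmem : i + (d - j) ∈ range (s+d+1) := by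
      simp only [Finset.mem_range] at hi hj ⊢
      omega
    rw [Finset.sum_ite_eq (range (s+d+1)) (i + (d-j))
      (fun k => ((p i).coeff j * (Pl i ((d:ℚ) - j)).eval (m:ℚ)) * u (m+k)), if_pos hmem]
    rw [hPl_eval]
    have hcast : ((m + (d - j) : ℕ) : ℚ) = (m : ℚ) + ((d:ℚ) - j) := by
      simp only [Finset.mem_range] at hj
      rw [Nat.cast_add, Nat.cast_sub (by omega)]
    rw [hcast]
    have : ∀ t ∈ range i, ((m:ℚ) + ((d:ℚ) - j) + t + 1) = ((m:ℚ) + ((d:ℚ)-j)) + t + 1 :=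
      fun t _ => by ring
    rw [Finset.prod_congr rfl this]
    have hidx : m + (i + (d - j)) = (m + (d - j)) + i := by omega
    rw [hidx]
    ring
  -- nonvanishing
  set j0 : ℕ := (p s).natDegree with hj0
  have hj0d : j0 ≤ d := hdegle s (Finset.self_mem_range_succ s)
  set k0 : ℕ := s + (d - j0) with hk0
  have hcoeff : (C' k0).coeff s = (p s).leadingCoeff := by
    rw [hC']
    simp only [Polynomial.finset_sum_coeff]
    rw [Finset.sum_eq_single_of_mem s (Finset.self_mem_range_succ s)]
    · rw [Finset.sum_eq_single_of_mem j0 (Finset.mem_range.2 (by omega))]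
      · rw [if_pos rfl, Polynomial.coeff_C_mul]
        have : (Pl s ((d:ℚ) - j0)).coeff s = 1 := by
          have h1 := (hPl_monic s ((d:ℚ) - j0)).coeff_natDegree
          rwa [hPl_deg s ((d:ℚ) - j0)] at h1
        rw [this, mul_one, Polynomial.leadingCoeff]
      · intro j hj hne
        rw [if_neg, Polynomial.coeff_zero]
        simp only [Finset.mem_range] at hj
        omega
    · intro i hi hne
      apply Finset.sum_eq_zero
      intro j hj
      split_ifs with hcon
      · rw [Polynomial.coeff_C_mul]
        rw [Polynomial.coeff_eq_zero_of_natDegree_lt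
          (show (Pl i ((d:ℚ) - j)).natDegree < s by
            rw [hPl_deg]
            simp only [Finset.mem_range] at hi
            omega), mul_zero]
      · exact Polynomial.coeff_zero _
  have hk0ne : C' k0 ≠ 0 := by
    intro h0
    rw [h0, Polynomial.coeff_zero] at hcoeff
    exact hps (Polynomial.leadingCoeff_eq_zero.1 hcoeff.symm)
  set r : ℕ := Nat.findGreatest (fun k => C' k ≠ 0) (s+d) with hr
  have hrne : C' r ≠ 0 := by
    rw [hr]
    exact Nat.findGreatest_spec (P := fun k => C' k ≠ 0) (show k0 ≤ s + d by omega) hk0ne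
  have hrle : r ≤ s + d := Nat.findGreatest_le _
  refine ⟨r, C', hrne, fun m => ?_⟩
  rw [Finset.sum_subset (Finset.range_subset_range.2 (by omega : r + 1 ≤ s + d + 1))]
  · exact main m
  · intro k hk hk2
    simp only [Finset.mem_range] at hk hk2
    have : C' k = 0 := by
      by_contra hne
      exact absurd (Nat.le_findGreatest (P := fun k => C' k ≠ 0) (show k ≤ s + d by omega) hne) (by omega)
    rw [this, Polynomial.eval_zero, zero_mul]

end

theorem pRecursive_iff_dFinite (u : ℕ → ℚ) :
    PRecursive u ↔ DFinitePS (PowerSeries.mk u) := by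
  constructor
  · rintro ⟨r, c, hc, hrec⟩
    exact forward u r c hc hrec
  · rintro ⟨s, p, hps, heq⟩
    exact backward u s p hps heq
end

section
/- The Apéry numbers A_n = ∑_{k=0}^{n} binomial(n+k, k)^2 · binomial(n, k)^2 satisfy the recurrence (n+2)^3·A_{n+2} − (2n+3)(17n^2 + 51n + 39)·A_{n+1} + (n+1)^3·A_n = 0 for all natural numbers n. -/
open Nat

/-- The Apéry numbers. -/
def apery (n : ℕ) : ℤ :=
  ∑ k ∈ Finset.range (n + 1), ((n + k).choose k : ℤ) ^ 2 * (n.choose k : ℤ) ^ 2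

private def B (n k : ℕ) : ℚ := ((n + k).choose k : ℚ) ^ 2 * (n.choose k : ℚ) ^ 2

private def G (n : ℕ) : ℕ → ℚ
  | 0 => 0
  | (k + 1) => 4 * (2 * (n : ℚ) + 3) * ((k : ℚ) * (2 * (k : ℚ) + 1) - (2 * (n : ℚ) + 3) ^ 2)
      * B (n + 1) k

private lemma Bzero (n k : ℕ) (h : n < k) : B n k = 0 := by
  simp [B, Nat.choose_eq_zero_of_lt h]

/-- ratio in `n`. -/
private lemma R1 (n k : ℕ) :
    ((n + 1 - k : ℕ) : ℚ) ^ 2 * B (n + 1) k = ((n : ℚ) + k + 1) ^ 2 * B n k := by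
  have h1 := Nat.choose_mul_succ_eq (n + k) k
  rw [show n + k + 1 - k = n + 1 by omega] at h1
  have h2 := Nat.choose_mul_succ_eq n k
  have q1 : ((n + k).choose k : ℚ) * ((n : ℚ) + k + 1)
      = ((n + k + 1).choose k : ℚ) * ((n : ℚ) + 1) := by exact_mod_cast h1
  have q2 : (n.choose k : ℚ) * ((n : ℚ) + 1)
      = ((n + 1).choose k : ℚ) * ((n + 1 - k : ℕ) : ℚ) := by exact_mod_cast h2
  have hN : ((n : ℚ) + 1) ≠ 0 := by positivity
  have key : ((n + 1 - k : ℕ) : ℚ) * (((n + 1 + k).choose k : ℚ) * ((n + 1).choose k : ℚ))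
      = ((n : ℚ) + k + 1) * (((n + k).choose k : ℚ) * (n.choose k : ℚ)) := by
    apply mul_left_cancel₀ hN
    rw [show n + 1 + k = n + k + 1 by omega]
    calc ((n : ℚ) + 1) * (((n + 1 - k : ℕ) : ℚ)
            * (((n + k + 1).choose k : ℚ) * ((n + 1).choose k : ℚ)))
        = (((n + k + 1).choose k : ℚ) * ((n : ℚ) + 1))
            * (((n + 1).choose k : ℚ) * ((n + 1 - k : ℕ) : ℚ)) := by ring
      _ = (((n + k).choose k : ℚ) * ((n : ℚ) + k + 1))
            * ((n.choose k : ℚ) * ((n : ℚ) + 1)) := by rw [← q1, ← q2]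
      _ = ((n : ℚ) + 1) * (((n : ℚ) + k + 1)
            * (((n + k).choose k : ℚ) * (n.choose k : ℚ))) := by ring
  simp only [B]
  calc ((n + 1 - k : ℕ) : ℚ) ^ 2 * (((n + 1 + k).choose k : ℚ) ^ 2 * ((n + 1).choose k : ℚ) ^ 2)
      = (((n + 1 - k : ℕ) : ℚ) * (((n + 1 + k).choose k : ℚ) * ((n + 1).choose k : ℚ))) ^ 2 := by
        ring
    _ = (((n : ℚ) + k + 1) * (((n + k).choose k : ℚ) * (n.choose k : ℚ))) ^ 2 := by rw [key]
    _ = ((n : ℚ) + k + 1) ^ 2 * (((n + k).choose k : ℚ) ^ 2 * (n.choose k : ℚ) ^ 2) := by ring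

/-- ratio in `k`. -/
private lemma R2 (n k : ℕ) :
    ((k : ℚ) + 1) ^ 4 * B n (k + 1)
      = ((n : ℚ) + k + 1) ^ 2 * ((n - k : ℕ) : ℚ) ^ 2 * B n k := by
  have h1 := Nat.add_one_mul_choose_eq (n + k) k
  have h2 := Nat.choose_succ_right_eq n k
  have q1 : ((n : ℚ) + k + 1) * ((n + k).choose k : ℚ)
      = ((n + k + 1).choose (k + 1) : ℚ) * ((k : ℚ) + 1) := by exact_mod_cast h1
  have q2 : (n.choose (k + 1) : ℚ) * ((k : ℚ) + 1)
      = (n.choose k : ℚ) * ((n - k : ℕ) : ℚ) := by exact_mod_cast h2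
  have key : ((k : ℚ) + 1) ^ 2 * (((n + (k + 1)).choose (k + 1) : ℚ) * (n.choose (k + 1) : ℚ))
      = ((n : ℚ) + k + 1) * ((n - k : ℕ) : ℚ)
        * (((n + k).choose k : ℚ) * (n.choose k : ℚ)) := by
    rw [show n + (k + 1) = n + k + 1 by omega]
    calc ((k : ℚ) + 1) ^ 2 * (((n + k + 1).choose (k + 1) : ℚ) * (n.choose (k + 1) : ℚ))
        = (((n + k + 1).choose (k + 1) : ℚ) * ((k : ℚ) + 1))
            * ((n.choose (k + 1) : ℚ) * ((k : ℚ) + 1)) := by ring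
      _ = (((n : ℚ) + k + 1) * ((n + k).choose k : ℚ))
            * ((n.choose k : ℚ) * ((n - k : ℕ) : ℚ)) := by rw [← q1, q2]
      _ = ((n : ℚ) + k + 1) * ((n - k : ℕ) : ℚ)
            * (((n + k).choose k : ℚ) * (n.choose k : ℚ)) := by ring
  simp only [B]
  calc ((k : ℚ) + 1) ^ 4 * (((n + (k + 1)).choose (k + 1) : ℚ) ^ 2 * (n.choose (k + 1) : ℚ) ^ 2)
      = (((k : ℚ) + 1) ^ 2
          * (((n + (k + 1)).choose (k + 1) : ℚ) * (n.choose (k + 1) : ℚ))) ^ 2 := by ring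
    _ = (((n : ℚ) + k + 1) * ((n - k : ℕ) : ℚ)
          * (((n + k).choose k : ℚ) * (n.choose k : ℚ))) ^ 2 := by rw [key]
    _ = ((n : ℚ) + k + 1) ^ 2 * ((n - k : ℕ) : ℚ) ^ 2
          * (((n + k).choose k : ℚ) ^ 2 * (n.choose k : ℚ) ^ 2) := by ring

private lemma key (n k : ℕ) :
    ((n : ℚ) + 2) ^ 3 * B (n + 2) k
      - (2 * (n : ℚ) + 3) * (17 * (n : ℚ) ^ 2 + 51 * (n : ℚ) + 39) * B (n + 1) k
      + ((n : ℚ) + 1) ^ 3 * B n k = G n (k + 1) - G n k := by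
  rcases Nat.lt_or_ge n k with hnk | hk
  · -- k ≥ n + 1 cases
    rcases Nat.lt_or_ge (n + 2) k with h3 | h3
    · -- k ≥ n + 3 : everything vanishes
      obtain ⟨j, rfl⟩ : ∃ j, k = n + 3 + j := ⟨k - (n + 3), by omega⟩
      rw [show (n + 3 + j : ℕ) = (n + 2 + j) + 1 from by omega]
      simp only [G]
      rw [Bzero n (n + 2 + j + 1) (by omega), Bzero (n + 1) (n + 2 + j + 1) (by omega),
        Bzero (n + 2) (n + 2 + j + 1) (by omega), Bzero (n + 1) (n + 2 + j) (by omega)]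
      ring
    · rcases Nat.lt_or_ge k (n + 2) with h2 | h2
      · -- k = n + 1
        have hk1 : k = n + 1 := by omega
        subst hk1
        rw [show (n + 2 : ℕ) = (n + 1) + 1 from by omega]
        simp only [G]
        have E1 := R1 (n + 1) (n + 1)
        rw [show (n + 1 + 1 - (n + 1) : ℕ) = 1 from by omega] at E1
        have E3 := R2 (n + 1) n
        rw [show (n + 1 - n : ℕ) = 1 from by omega] at E3
        push_cast at E1 E3
        set y := B (n + 1) (n + 1) with hy
        have hz : B (n + 1 + 1) (n + 1) = (2 * (n : ℚ) + 3) ^ 2 * y := by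
          linear_combination E1
        have hu : B (n + 1) n = ((n : ℚ) + 1) ^ 4 / (2 * (n : ℚ) + 2) ^ 2 * y := by
          rw [div_mul_eq_mul_div, eq_div_iff (by positivity)]
          linear_combination -E3
        rw [Bzero n (n + 1) (by omega), hz, hu]
        push_cast
        field_simp
        ring
      · -- k = n + 2
        have hk2 : k = n + 2 := by omega
        subst hk2
        rw [show (n + 2 : ℕ) = (n + 1) + 1 from by omega]
        simp only [G]
        have E1 := R1 (n + 1) (n + 1)
        rw [show (n + 1 + 1 - (n + 1) : ℕ) = 1 from by omega] at E1
        have E2 := R2 (n + 1 + 1) (n + 1)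
        rw [show (n + 1 + 1 - (n + 1) : ℕ) = 1 from by omega] at E2
        push_cast at E1 E2
        set y := B (n + 1) (n + 1) with hy
        have hz : B (n + 1 + 1) (n + 1 + 1)
            = (2 * (n : ℚ) + 4) ^ 2 * (2 * (n : ℚ) + 3) ^ 2 / ((n : ℚ) + 2) ^ 4 * y := by
          rw [div_mul_eq_mul_div, eq_div_iff (by positivity)]
          linear_combination E2 + (2 * (n : ℚ) + 4) ^ 2 * E1
        rw [Bzero (n + 1) (n + 1 + 1) (by omega), Bzero n (n + 1 + 1) (by omega), hz]
        push_cast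
        field_simp
        ring
  · -- main case : k ≤ n
    rcases Nat.eq_zero_or_pos k with rfl | hk0
    · simp [G, B]
      ring
    · obtain ⟨j, rfl⟩ : ∃ j, k = j + 1 := ⟨k - 1, by omega⟩
      obtain ⟨m, rfl⟩ : ∃ m, n = j + 1 + m := ⟨n - (j + 1), by omega⟩
      simp only [G]
      have E1 := R1 (j + 1 + m) (j + 1)
      rw [show (j + 1 + m + 1 - (j + 1) : ℕ) = m + 1 from by omega] at E1
      have E2 := R1 (j + 1 + m + 1) (j + 1)
      rw [show (j + 1 + m + 1 + 1 - (j + 1) : ℕ) = m + 2 from by omega,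
        show (j + 1 + m + 1 + 1 : ℕ) = j + 1 + m + 2 from by omega] at E2
      have E3 := R2 (j + 1 + m + 1) j
      rw [show (j + 1 + m + 1 - j : ℕ) = m + 2 from by omega] at E3
      push_cast at E1 E2 E3
      set y := B (j + 1 + m + 1) (j + 1) with hy
      have hx : B (j + 1 + m) (j + 1)
          = ((m : ℚ) + 1) ^ 2 / (2 * (j : ℚ) + (m : ℚ) + 3) ^ 2 * y := by
        rw [div_mul_eq_mul_div, eq_div_iff (by positivity)]
        linear_combination -E1
      have hz : B (j + 1 + m + 2) (j + 1)
          = (2 * (j : ℚ) + (m : ℚ) + 4) ^ 2 / ((m : ℚ) + 2) ^ 2 * y := by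
        rw [div_mul_eq_mul_div, eq_div_iff (by positivity)]
        linear_combination E2
      have hu : B (j + 1 + m + 1) j
          = ((j : ℚ) + 1) ^ 4 / ((2 * (j : ℚ) + (m : ℚ) + 3) ^ 2 * ((m : ℚ) + 2) ^ 2) * y := by
        rw [div_mul_eq_mul_div, eq_div_iff (by positivity)]
        linear_combination -E3
      rw [hx, hz, hu]
      push_cast
      field_simp
      ring

theorem apery_rec (n : ℕ) :
    ((n : ℤ) + 2) ^ 3 * apery (n + 2)
      - (2 * n + 3) * (17 * (n : ℤ) ^ 2 + 51 * n + 39) * apery (n + 1)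
      + ((n : ℤ) + 1) ^ 3 * apery n = 0 := by
  have tele := Finset.sum_range_sub (G n) (n + 3)
  have hsum : ∑ k ∈ Finset.range (n + 3),
      (((n : ℚ) + 2) ^ 3 * B (n + 2) k
        - (2 * (n : ℚ) + 3) * (17 * (n : ℚ) ^ 2 + 51 * (n : ℚ) + 39) * B (n + 1) k
        + ((n : ℚ) + 1) ^ 3 * B n k) = G n (n + 3) - G n 0 := by
    rw [← tele]
    exact Finset.sum_congr rfl fun k _ => key n k
  have hG0 : G n 0 = 0 := rfl
  have hG3 : G n (n + 3) = 0 := by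
    rw [show n + 3 = (n + 2) + 1 by omega]
    simp only [G]
    rw [Bzero (n + 1) (n + 2) (by omega)]
    ring
  rw [hG0, hG3, sub_zero] at hsum
  have S2 : ∑ k ∈ Finset.range (n + 3), B (n + 2) k = ((apery (n + 2) : ℤ) : ℚ) := by
    rw [show n + 3 = (n + 2) + 1 by omega]
    simp only [apery, B]
    push_cast
    rfl
  have S1 : ∑ k ∈ Finset.range (n + 3), B (n + 1) k = ((apery (n + 1) : ℤ) : ℚ) := by
    rw [show n + 3 = (n + 2) + 1 by omega, Finset.sum_range_succ,
      Bzero (n + 1) (n + 2) (by omega), add_zero]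
    simp only [apery, B]
    push_cast
    rfl
  have S0 : ∑ k ∈ Finset.range (n + 3), B n k = ((apery n : ℤ) : ℚ) := by
    rw [show n + 3 = (n + 2) + 1 by omega, Finset.sum_range_succ,
      Bzero n (n + 2) (by omega), add_zero, Finset.sum_range_succ,
      Bzero n (n + 1) (by omega), add_zero]
    simp only [apery, B]
    push_cast
    rfl
  rw [Finset.sum_add_distrib, Finset.sum_sub_distrib, ← Finset.mul_sum, ← Finset.mul_sum,
    ← Finset.mul_sum, S2, S1, S0] at hsum
  exact_mod_cast hsum
end

section
/- For every natural number n ≥ 1, the reciprocal Fibonacci value 1/F_n satisfies: the sequence (1/F_n)_{n≥1} is not P-recursive over ℚ. -/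
/-- If `u * u = u + 1` in a commutative ring, then `u ^ (n+1) = fib (n+1) * u + fib n`. -/
lemma fib_pow_aux {R : Type*} [CommRing R] (u : R) (hu : u * u = u + 1) :
    ∀ n : ℕ, u ^ (n + 1) = (Nat.fib (n + 1) : R) * u + (Nat.fib n : R)
  | 0 => by simp
  | n + 1 => by
    have ih := fib_pow_aux u hu n
    calc u ^ (n + 2) = u ^ (n + 1) * u := by ring
    _ = (Nat.fib (n + 1) : R) * (u * u) + (Nat.fib n : R) * u := by rw [ih]; ring
    _ = ((Nat.fib (n + 1) : R) + (Nat.fib n : R)) * u + (Nat.fib (n + 1) : R) := by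
        rw [hu]; ring
    _ = (Nat.fib (n + 2) : R) * u + (Nat.fib (n + 1) : R) := by
        rw [Nat.fib_add_two]; push_cast; ring

/-- An odd prime `q ≠ 5` does not divide `fib q`. -/
lemma prime_not_dvd_fib_self {q : ℕ} (hq : q.Prime) (h2 : q ≠ 2) (h5 : q ≠ 5) :
    ¬ q ∣ Nat.fib q := by
  intro hdvd
  haveI : Fact q.Prime := ⟨hq⟩
  set f : Polynomial (ZMod q) := Polynomial.X ^ 2 - Polynomial.X - 1 with hf
  have hdeg : f.degree = 2 := by
    rw [hf]
    compute_degree!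
  have hdeg0 : f.degree ≠ 0 := by rw [hdeg]; norm_num
  haveI : Nontrivial (AdjoinRoot f) := AdjoinRoot.nontrivial f hdeg0
  have hinj : Function.Injective (AdjoinRoot.of f) :=
    AdjoinRoot.of.injective_of_degree_ne_zero hdeg0
  haveI : CharP (AdjoinRoot f) q := charP_of_injective_ringHom hinj q
  set φ : AdjoinRoot f := AdjoinRoot.root f with hφdef
  have hφ : φ * φ = φ + 1 := by
    have h0 := AdjoinRoot.eval₂_root f
    rw [hf] at h0
    simp only [Polynomial.eval₂_sub, Polynomial.eval₂_pow, Polynomial.eval₂_X,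
      Polynomial.eval₂_one] at h0
    rw [← hφdef] at h0
    linear_combination h0
  set ψ : AdjoinRoot f := 1 - φ with hψdef
  have hψ : ψ * ψ = ψ + 1 := by rw [hψdef]; linear_combination hφ
  have hqpos : q - 1 + 1 = q := Nat.succ_pred_eq_of_pos hq.pos
  have hfibq : ((Nat.fib q : ℕ) : AdjoinRoot f) = 0 :=
    (CharP.cast_eq_zero_iff (AdjoinRoot f) q _).mpr hdvd
  have hφq : φ ^ q = (Nat.fib (q - 1) : AdjoinRoot f) := by
    have h := fib_pow_aux φ hφ (q - 1)
    rw [hqpos] at h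
    rw [h, hfibq, zero_mul, zero_add]
  have hψq : ψ ^ q = (Nat.fib (q - 1) : AdjoinRoot f) := by
    have h := fib_pow_aux ψ hψ (q - 1)
    rw [hqpos] at h
    rw [h, hfibq, zero_mul, zero_add]
  set c : AdjoinRoot f := (Nat.fib (q - 1) : AdjoinRoot f) with hc
  have hsum : (2 : AdjoinRoot f) * c = 1 := by
    have h1 : (φ + ψ) ^ q = φ ^ q + ψ ^ q := add_pow_char φ ψ q
    rw [hφq, hψq] at h1
    have hsum1 : φ + ψ = 1 := by rw [hψdef]; ring
    rw [hsum1, one_pow] at h1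
    linear_combination -h1
  have hprod : c * c = -1 := by
    have h1 : (φ * ψ) ^ q = φ ^ q * ψ ^ q := mul_pow φ ψ q
    have hprod1 : φ * ψ = -1 := by rw [hψdef]; linear_combination -hφ
    rw [hprod1, hφq, hψq, (hq.odd_of_ne_two h2).neg_one_pow] at h1
    linear_combination -h1
  have h5R : (5 : AdjoinRoot f) = 0 := by
    linear_combination (-(2 * c + 1)) * hsum + 4 * hprod
  have h5Z : ((5 : ℕ) : ZMod q) = 0 := by
    apply hinj
    rw [map_natCast, map_zero]
    exact_mod_cast h5R
  have : q ∣ 5 := (ZMod.natCast_eq_zero_iff 5 q).mp h5Z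
  exact h5 ((Nat.prime_dvd_prime_iff_eq hq (by norm_num)).mp this)

/-- Rank of apparition: if `q` is prime and the prime `p` divides `fib q`, then
`p ∣ fib m ↔ q ∣ m`. -/
lemma dvd_fib_iff_of_prime_dvd {p q : ℕ} (hq : q.Prime) (hp : p.Prime)
    (hpq : p ∣ Nat.fib q) (m : ℕ) : p ∣ Nat.fib m ↔ q ∣ m := by
  constructor
  · intro h
    have h1 : p ∣ Nat.fib (Nat.gcd m q) := by
      rw [Nat.fib_gcd]; exact Nat.dvd_gcd h hpq
    rcases hq.eq_one_or_self_of_dvd _ (Nat.gcd_dvd_right m q) with h2 | h2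
    · rw [h2, Nat.fib_one] at h1
      exact absurd (Nat.dvd_one.mp h1) hp.ne_one
    · exact h2 ▸ Nat.gcd_dvd_left m q
  · intro h
    exact dvd_trans hpq (Nat.fib_dvd q m h)


open Polynomial in
/-- Clearing denominators of finitely many rational polynomials. -/
lemma exists_int_normalization (r : ℕ) (c : ℕ → Polynomial ℚ) :
    ∃ d : ℕ, 0 < d ∧ ∃ D : ℕ → Polynomial ℤ,
      ∀ i ∈ Finset.range (r + 1),
        (D i).map (Int.castRingHom ℚ) = Polynomial.C (d : ℚ) * c i := by
  classical
  set d : ℕ := ∏ i ∈ Finset.range (r + 1), ∏ k ∈ (c i).support, ((c i).coeff k).den with hd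
  have hdpos : 0 < d :=
    Finset.prod_pos fun i _ => Finset.prod_pos fun k _ => ((c i).coeff k).pos
  refine ⟨d, hdpos, fun i =>
    ∑ k ∈ (c i).support, Polynomial.monomial k (((d : ℚ) * (c i).coeff k).num), ?_⟩
  intro i hi
  have key : ∀ k ∈ (c i).support,
      ((((d : ℚ) * (c i).coeff k).num : ℤ) : ℚ) = (d : ℚ) * (c i).coeff k := by
    intro k hk
    obtain ⟨t, ht⟩ : (((c i).coeff k).den : ℕ) ∣ d :=
      dvd_trans (Finset.dvd_prod_of_mem (fun k => ((c i).coeff k).den) hk)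
        (Finset.dvd_prod_of_mem (fun j => ∏ k ∈ (c j).support, ((c j).coeff k).den) hi)
    have hval : (d : ℚ) * (c i).coeff k = ((((c i).coeff k).num * t : ℤ) : ℚ) := by
      rw [ht]
      push_cast
      rw [mul_comm (((c i).coeff k).den : ℚ) (t : ℚ), mul_assoc,
        Rat.den_mul_eq_num]
      ring
    rw [hval, Rat.num_intCast]
  rw [Polynomial.map_sum]
  conv_rhs => rw [(c i).as_sum_support, Finset.mul_sum]
  refine Finset.sum_congr rfl fun k hk => ?_
  rw [Polynomial.map_monomial]
  rw [Polynomial.C_mul_monomial]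
  congr 1
  exact key k hk

lemma exists_good_n {p q : ℕ} (hp : p.Prime) (hq : q.Prime) (hne : p ≠ q) (a : ZMod p)
    (r : ℕ) : ∃ n : ℕ, 1 ≤ n ∧ (n : ZMod p) = a ∧ q ∣ (n + r) := by
  haveI : Fact p.Prime := ⟨hp⟩
  haveI : Fact q.Prime := ⟨hq⟩
  have hco : p.Coprime q := (Nat.coprime_primes hp hq).mpr hne
  obtain ⟨k, hk1, hk2⟩ := Nat.chineseRemainder hco a.val (-(r : ZMod q)).val
  have hpq1 : 1 ≤ p * q := Nat.one_le_iff_ne_zero.mpr (Nat.mul_ne_zero hp.pos.ne' hq.pos.ne')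
  refine ⟨k + p * q, by omega, ?_, ?_⟩
  · have h1 : ((k : ℕ) : ZMod p) = ((a.val : ℕ) : ZMod p) :=
      (ZMod.natCast_eq_natCast_iff _ _ _).mpr hk1
    push_cast
    rw [h1, ZMod.natCast_rightInverse a, ZMod.natCast_self]
    ring
  · have h1 : ((k : ℕ) : ZMod q) = (((-(r : ZMod q)).val : ℕ) : ZMod q) :=
      (ZMod.natCast_eq_natCast_iff _ _ _).mpr hk2
    rw [← ZMod.natCast_eq_zero_iff]
    push_cast
    rw [h1, ZMod.natCast_rightInverse (-(r : ZMod q)), ZMod.natCast_self]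
    ring

lemma exists_good_q (B K : ℕ) (hK : K ≠ 0) :
    ∃ q : ℕ, q.Prime ∧ B < q ∧ 5 < q ∧ ¬ (Nat.fib q).minFac ∣ K := by
  by_contra hcon
  push_neg at hcon
  set S : Set ℕ := {q | q.Prime ∧ max B 5 < q} with hS
  have hfib2 : ∀ q ∈ S, 2 ≤ Nat.fib q := by
    intro q hq
    calc 2 ≤ Nat.fib 3 := by norm_num
    _ ≤ Nat.fib q := Nat.fib_mono (by have := hq.2; omega)
  have hminfac : ∀ q ∈ S, (Nat.fib q).minFac.Prime := fun q hq =>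
    Nat.minFac_prime (by have := hfib2 q hq; omega)
  have hdvdfib : ∀ q ∈ S, (Nat.fib q).minFac ∣ Nat.fib q := fun q _ => Nat.minFac_dvd _
  have hSinf : S.Infinite := by
    have h1 : {q : ℕ | q.Prime}.Infinite := Nat.infinite_setOf_prime
    have h2 : S = {q : ℕ | q.Prime} \ {q : ℕ | q ≤ max B 5} := by
      ext x
      simp only [hS, Set.mem_setOf_eq, Set.mem_diff]
      constructor
      · rintro ⟨h, h'⟩; exact ⟨h, by omega⟩
      · rintro ⟨h, h'⟩; exact ⟨h, by omega⟩
    rw [h2]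
    exact h1.diff ((Set.finite_Iic (max B 5)).subset fun x hx => hx)
  have hmaps : ∀ q ∈ S, (Nat.fib q).minFac ∈ K.primeFactors := by
    intro q hq
    rw [Nat.mem_primeFactors]
    exact ⟨hminfac q hq, hcon q hq.1 (by have := hq.2; omega) (by have := hq.2; omega), hK⟩
  have hinj : Set.InjOn (fun q => (Nat.fib q).minFac) S := by
    intro q hq q' hq' heq
    by_contra hne
    have hco : Nat.Coprime q q' := (Nat.coprime_primes hq.1 hq'.1).mpr hne
    have h1 : (Nat.fib q).minFac ∣ Nat.gcd (Nat.fib q) (Nat.fib q') := by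
      refine Nat.dvd_gcd (hdvdfib q hq) ?_
      simp only [] at heq
      rw [heq]; exact hdvdfib q' hq'
    rw [← Nat.fib_gcd, hco, Nat.fib_one] at h1
    exact (hminfac q hq).ne_one (Nat.dvd_one.mp h1)
  have hfin : S.Finite := by
    refine Set.Finite.of_finite_image ?_ hinj
    exact Set.Finite.subset K.primeFactors.finite_toSet
      (by rintro x ⟨q, hq, rfl⟩; exact hmaps q hq)
  exact hSinf hfin

/-- The sequence `(1/F_n)_{n ≥ 1}` of reciprocal Fibonacci numbers is not P-recursive:
there is no linear recurrence with polynomial coefficients over ℚ, with nonzero leading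
coefficient polynomial, valid for all `n ≥ 1`. -/
theorem reciprocal_fibonacci_not_pRecursive :
    ¬ ∃ (r : ℕ) (c : ℕ → Polynomial ℚ), c r ≠ 0 ∧
        ∀ n : ℕ, 1 ≤ n →
          ∑ i ∈ Finset.range (r + 1),
            (c i).eval (n : ℚ) * (1 / (Nat.fib (n + i) : ℚ)) = 0 := by
  rintro ⟨r, c, hcr, hrec⟩
  classical
  obtain ⟨d, hd, D, hmap⟩ := exists_int_normalization r c
  have hDr : D r ≠ 0 := by
    intro h
    have h1 := hmap r (Finset.self_mem_range_succ r)
    rw [h, Polynomial.map_zero] at h1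
    have hC : (Polynomial.C (d : ℚ)) ≠ 0 := by
      simp only [ne_eq, Polynomial.C_eq_zero, Nat.cast_eq_zero]
      omega
    rcases mul_eq_zero.mp h1.symm with h2 | h2
    · exact hC h2
    · exact hcr h2
  set ℓ : ℤ := (D r).leadingCoeff with hl
  have hlne : ℓ ≠ 0 := Polynomial.leadingCoeff_ne_zero.mpr hDr
  set K : ℕ := ℓ.natAbs * ((D r).natDegree + 1).factorial with hKdef
  have hKne : K ≠ 0 :=
    Nat.mul_ne_zero (Int.natAbs_ne_zero.mpr hlne) (Nat.factorial_ne_zero _)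
  obtain ⟨q, hq, hBq, h5q, hpK⟩ := exists_good_q r K hKne
  set p : ℕ := (Nat.fib q).minFac with hpdef
  have hfib2 : 2 ≤ Nat.fib q := by
    calc 2 ≤ Nat.fib 3 := by norm_num
    _ ≤ Nat.fib q := Nat.fib_mono (by omega)
  have hpp : p.Prime := Nat.minFac_prime (by omega)
  haveI : Fact p.Prime := ⟨hpp⟩
  have hpdvd : p ∣ Nat.fib q := Nat.minFac_dvd _
  have hrank : ∀ m, p ∣ Nat.fib m ↔ q ∣ m := dvd_fib_iff_of_prime_dvd hq hpp hpdvd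
  have hpq : p ≠ q := by
    intro h
    exact prime_not_dvd_fib_self hq (by omega) (by omega) (h ▸ hpdvd)
  have hpl : ¬ ((p : ℤ) ∣ ℓ) := by
    intro h
    apply hpK
    have h1 : p ∣ ℓ.natAbs := by
      have := Int.natAbs_dvd_natAbs.mpr h
      simpa using this
    exact Dvd.dvd.mul_right h1 _
  have hpdeg : (D r).natDegree < p := by
    by_contra hle
    push_neg at hle
    exact hpK (Dvd.dvd.mul_left (Nat.dvd_factorial hpp.pos (by omega)) _)
  set Db : Polynomial (ZMod p) := (D r).map (Int.castRingHom (ZMod p)) with hDbdef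
  have hDbne : Db ≠ 0 := by
    intro h
    have h1 : Db.coeff (D r).natDegree = 0 := by rw [h]; simp
    rw [hDbdef, Polynomial.coeff_map] at h1
    have h2 : ((ℓ : ℤ) : ZMod p) = 0 := h1
    rw [ZMod.intCast_zmod_eq_zero_iff_dvd] at h2
    exact hpl h2
  obtain ⟨a, ha⟩ : ∃ a : ZMod p, Db.eval a ≠ 0 := by
    apply Polynomial.exists_eval_ne_zero_of_natDegree_lt_card Db hDbne
    rw [Cardinal.mk_fintype, ZMod.card]
    exact_mod_cast lt_of_le_of_lt Polynomial.natDegree_map_le hpdeg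
  obtain ⟨n, hn1, hnp, hnq⟩ := exists_good_n hpp hq hpq a r
  have hfibpos : ∀ j : ℕ, 0 < Nat.fib (n + j) := fun j => Nat.fib_pos.mpr (by omega)
  set E : ℤ := ∑ i ∈ Finset.range (r + 1), (D i).eval (n : ℤ) *
      ∏ j ∈ (Finset.range (r + 1)).erase i, (Nat.fib (n + j) : ℤ) with hEdef
  have hEzero : E = 0 := by
    have hcast : (E : ℚ) = ((d : ℚ) * ∏ j ∈ Finset.range (r + 1), (Nat.fib (n + j) : ℚ)) *
        (∑ i ∈ Finset.range (r + 1), (c i).eval (n : ℚ) * (1 / (Nat.fib (n + i) : ℚ))) := by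
      rw [hEdef]
      push_cast
      rw [Finset.mul_sum]
      refine Finset.sum_congr rfl fun i hi => ?_
      have h1 : (((D i).eval (n : ℤ) : ℤ) : ℚ) = (d : ℚ) * (c i).eval (n : ℚ) := by
        have h2 := hmap i hi
        have h3 := Polynomial.eval_intCast_map (Int.castRingHom ℚ) (D i) (n : ℤ)
        rw [h2] at h3
        simp only [Polynomial.eval_mul, Polynomial.eval_C] at h3
        have h4 : ((n : ℤ) : ℚ) = (n : ℚ) := by push_cast; rfl
        rw [h4] at h3
        simpa using h3.symm
      have hF : ((Nat.fib (n + i) : ℚ)) ≠ 0 := by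
        exact_mod_cast (hfibpos i).ne'
      have h4 : (∏ j ∈ Finset.range (r + 1), (Nat.fib (n + j) : ℚ)) =
          (∏ j ∈ (Finset.range (r + 1)).erase i, (Nat.fib (n + j) : ℚ)) *
            (Nat.fib (n + i) : ℚ) :=
        (Finset.prod_erase_mul _ _ hi).symm
      rw [h1, h4]
      field_simp
    rw [hrec n hn1, mul_zero] at hcast
    exact_mod_cast hcast
  have hpfibr : (p : ℤ) ∣ (Nat.fib (n + r) : ℤ) :=
    Int.natCast_dvd_natCast.mpr ((hrank (n + r)).mpr hnq)
  have hterm : ∀ i ∈ (Finset.range (r + 1)).erase r,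
      (p : ℤ) ∣ (D i).eval (n : ℤ) *
        ∏ j ∈ (Finset.range (r + 1)).erase i, (Nat.fib (n + j) : ℤ) := by
    intro i hi
    have hir : i ≠ r := Finset.ne_of_mem_erase hi
    refine Dvd.dvd.mul_left (dvd_trans hpfibr
      (Finset.dvd_prod_of_mem (fun j => (Nat.fib (n + j) : ℤ)) ?_)) _
    exact Finset.mem_erase.mpr ⟨Ne.symm hir, Finset.self_mem_range_succ r⟩
  have hdvd_rest : (p : ℤ) ∣ ∑ i ∈ (Finset.range (r + 1)).erase r,
      (D i).eval (n : ℤ) * ∏ j ∈ (Finset.range (r + 1)).erase i, (Nat.fib (n + j) : ℤ) :=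
    Finset.dvd_sum hterm
  have hdvd_r : (p : ℤ) ∣ (D r).eval (n : ℤ) *
      ∏ j ∈ (Finset.range (r + 1)).erase r, (Nat.fib (n + j) : ℤ) := by
    have hsplit := Finset.add_sum_erase (Finset.range (r + 1))
      (fun i => (D i).eval (n : ℤ) *
        ∏ j ∈ (Finset.range (r + 1)).erase i, (Nat.fib (n + j) : ℤ))
      (Finset.self_mem_range_succ r)
    have h1 : (D r).eval (n : ℤ) *
        ∏ j ∈ (Finset.range (r + 1)).erase r, (Nat.fib (n + j) : ℤ) =
        E - ∑ i ∈ (Finset.range (r + 1)).erase r,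
          (D i).eval (n : ℤ) * ∏ j ∈ (Finset.range (r + 1)).erase i, (Nat.fib (n + j) : ℤ) := by
      rw [hEdef, ← hsplit]
      ring
    rw [h1, hEzero, zero_sub]
    exact (dvd_neg).mpr hdvd_rest
  have hpint : Prime (p : ℤ) := Nat.prime_iff_prime_int.mp hpp
  rcases (hpint.dvd_mul).mp hdvd_r with hcase | hcase
  · have h0 : (((D r).eval (n : ℤ) : ℤ) : ZMod p) = 0 :=
      (ZMod.intCast_zmod_eq_zero_iff_dvd _ _).mpr hcase
    have h3 := Polynomial.eval_intCast_map (Int.castRingHom (ZMod p)) (D r) (n : ℤ)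
    rw [← hDbdef] at h3
    have h4 : ((n : ℤ) : ZMod p) = a := by push_cast; exact hnp
    rw [h4] at h3
    exact ha (h3.trans h0)
  · have h1 : (p : ℤ) ∣ ((∏ j ∈ (Finset.range (r + 1)).erase r, Nat.fib (n + j) : ℕ) : ℤ) := by
      rw [Nat.cast_prod]
      exact hcase
    have h2 : p ∣ ∏ j ∈ (Finset.range (r + 1)).erase r, Nat.fib (n + j) :=
      Int.natCast_dvd_natCast.mp h1
    obtain ⟨j, hj, hdvdj⟩ := (hpp.prime.dvd_finset_prod_iff _).mp h2
    have hjr : j ≠ r := Finset.ne_of_mem_erase hj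
    have hjlt : j < r := by
      have := Finset.mem_range.mp (Finset.mem_of_mem_erase hj)
      omega
    have hqj : q ∣ n + j := (hrank (n + j)).mp hdvdj
    have hqd : q ∣ r - j := by
      have h5 := Nat.dvd_sub hnq hqj
      have h6 : n + r - (n + j) = r - j := by omega
      rwa [h6] at h5
    have h7 := Nat.le_of_dvd (by omega) hqd
    omega
end

section
/- If f ∈ ℚ[[x]] is a formal power series that is algebraic over ℚ(x) (i.e., there exists a nonzero polynomial P ∈ ℚ[x][y] with P(x, f) = 0), then f is D-finite. -/
open PowerSeries Polynomial

noncomputable def evf (f : PowerSeries ℚ) : Polynomial (Polynomial ℚ) →+* PowerSeries ℚ :=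
  Polynomial.eval₂RingHom (Polynomial.coeToPowerSeries.algHom ℚ).toRingHom f

lemma algHom_coe (p : Polynomial ℚ) :
    (Polynomial.coeToPowerSeries.algHom ℚ).toRingHom p = (p : PowerSeries ℚ) := by
  simp [Polynomial.coeToPowerSeries.algHom_apply, Algebra.algebraMap_self]

lemma evf_apply (f : PowerSeries ℚ) (P : Polynomial (Polynomial ℚ)) :
    evf f P = Polynomial.eval₂ (Polynomial.coeToPowerSeries.algHom ℚ).toRingHom f P := rfl

lemma evf_monomial (f : PowerSeries ℚ) (n : ℕ) (a : Polynomial ℚ) :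
    evf f (Polynomial.monomial n a) = (a : PowerSeries ℚ) * f ^ n := by
  rw [evf_apply, Polynomial.eval₂_monomial, algHom_coe]

lemma evf_C (f : PowerSeries ℚ) (a : Polynomial ℚ) :
    evf f (Polynomial.C a) = (a : PowerSeries ℚ) := by
  rw [evf_apply, Polynomial.eval₂_C, algHom_coe]

lemma evf_X (f : PowerSeries ℚ) : evf f Polynomial.X = f := by
  rw [evf_apply, Polynomial.eval₂_X]

noncomputable def Dx (P : Polynomial (Polynomial ℚ)) : Polynomial (Polynomial ℚ) :=
  P.sum fun n a => Polynomial.monomial n (Polynomial.derivative a)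

lemma Dx_monomial (n : ℕ) (a : Polynomial ℚ) :
    Dx (Polynomial.monomial n a) = Polynomial.monomial n (Polynomial.derivative a) := by
  unfold Dx
  rw [Polynomial.sum_monomial_index]
  simp

lemma Dx_add (P Q : Polynomial (Polynomial ℚ)) : Dx (P + Q) = Dx P + Dx Q := by
  unfold Dx
  rw [Polynomial.sum_add_index] <;> simp [map_add]

lemma coe_natCast' (n : ℕ) : ((n : Polynomial ℚ) : PowerSeries ℚ) = (n : PowerSeries ℚ) := by
  rw [← Polynomial.coeToPowerSeries.ringHom_apply, map_natCast]

lemma deriv_evf (f : PowerSeries ℚ) (P : Polynomial (Polynomial ℚ)) :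
    derivative ℚ (evf f P) =
      evf f (Dx P) + evf f (Polynomial.derivative P) * derivative ℚ f := by
  induction P using Polynomial.induction_on' with
  | add p q hp hq =>
    rw [map_add, map_add, hp, hq, Dx_add, map_add, Polynomial.derivative_add, map_add]
    ring
  | monomial n a =>
    rw [evf_monomial, Dx_monomial, evf_monomial, Polynomial.derivative_monomial, evf_monomial,
      Derivation.leibniz, Derivation.leibniz_pow, PowerSeries.derivative_coe]
    simp only [smul_eq_mul, nsmul_eq_mul, Polynomial.coe_mul, coe_natCast']
    ring

lemma exists_B (f : PowerSeries ℚ) (Q : Polynomial (Polynomial ℚ)) (hQ0 : evf f Q = 0)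
    (n : ℕ) :
    ∃ B, (evf f (Polynomial.derivative Q)) ^ (2*n) * (⇑(derivative ℚ))^[n] f = evf f B := by
  set Qy := Polynomial.derivative Q with hQydef
  set g := evf f Qy with hgdef
  have hgDf : g * derivative ℚ f = - evf f (Dx Q) := by
    have h0 : derivative ℚ (evf f Q) = 0 := by rw [hQ0]; simp
    rw [deriv_evf] at h0
    linear_combination h0
  induction n with
  | zero => exact ⟨Polynomial.X, by simp [evf_X]⟩
  | succ n ih =>
    obtain ⟨B, hB⟩ := ih
    refine ⟨Qy^2 * Dx B - Qy * Polynomial.derivative B * Dx Q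
      - (2*n) • ((Qy * Dx Qy - Polynomial.derivative Qy * Dx Q) * B), ?_⟩
    have h1 := congrArg (⇑(PowerSeries.derivative ℚ)) hB
    rw [Derivation.leibniz, Derivation.leibniz_pow, deriv_evf, deriv_evf] at h1
    rw [Function.iterate_succ_apply']
    simp only [smul_eq_mul, nsmul_eq_mul] at h1 ⊢
    simp only [map_sub, map_mul, map_pow, map_natCast]
    cases n with
    | zero =>
      simp only [Nat.mul_zero, pow_zero, one_mul, Nat.cast_zero, zero_mul, mul_zero,
        Nat.cast_ofNat, sub_zero, add_zero, zero_add] at hB h1 ⊢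
      linear_combination g^2 * h1 + g * evf f (Polynomial.derivative B) * hgDf
    | succ m =>
      have e1 : 2 * (m+1) - 1 = 2*m + 1 := by omega
      rw [e1] at h1
      push_cast at h1 ⊢
      linear_combination g^2 * h1
        - ((2*(m:PowerSeries ℚ)+2) * g^(2*(m+1)) * ((⇑(derivative ℚ))^[m+1] f)
            * evf f (Polynomial.derivative Qy) - g * evf f (Polynomial.derivative B)) * hgDf
        - ((2*(m:PowerSeries ℚ)+2) * (g * evf f (Dx Qy)
            - evf f (Polynomial.derivative Qy) * evf f (Dx Q))) * hB

theorem algebraic_is_dFinite (f : PowerSeries ℚ)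
    (halg : ∃ P : Polynomial (Polynomial ℚ), P ≠ 0 ∧
      Polynomial.eval₂ (Polynomial.coeToPowerSeries.algHom ℚ).toRingHom f P = 0) :
    DFinitePS f := by
  classical
  obtain ⟨P₀, hP₀ne, hP₀⟩ := halg
  have hex : ∃ k : ℕ, ∃ P : Polynomial (Polynomial ℚ), (P ≠ 0 ∧ evf f P = 0) ∧ P.natDegree = k :=
    ⟨P₀.natDegree, P₀, ⟨hP₀ne, hP₀⟩, rfl⟩
  obtain ⟨Q, ⟨hQne, hQ0⟩, hQdeg⟩ := Nat.find_spec hex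
  have hmin : ∀ P : Polynomial (Polynomial ℚ), P ≠ 0 → evf f P = 0 →
      Nat.find hex ≤ P.natDegree := fun P h1 h2 => Nat.find_min' hex ⟨P, ⟨h1, h2⟩, rfl⟩
  -- degree at least 1
  have hk1 : Q.natDegree ≠ 0 := by
    intro h0
    obtain ⟨a, ha⟩ := Polynomial.natDegree_eq_zero.mp h0
    rw [← ha] at hQ0 hQne
    rw [evf_C, Polynomial.coe_eq_zero_iff] at hQ0
    exact hQne (by rw [hQ0, map_zero])
  set Qy := Polynomial.derivative Q with hQydef
  have hQyne : Qy ≠ 0 := by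
    intro h
    exact hk1 (Polynomial.natDegree_eq_zero_of_derivative_eq_zero h)
  set g := evf f Qy with hgdef
  have hgne : g ≠ 0 := by
    intro h
    have := hmin Qy hQyne h
    have h2 : Qy.natDegree < Q.natDegree := Polynomial.natDegree_derivative_lt hk1
    omega
  set d := Q.natDegree with hddef
  -- the E polynomials
  have hEex : ∀ n : ℕ, n ≤ d → ∃ E : Polynomial (Polynomial ℚ),
      evf f E = g ^ (2*d) * (⇑(derivative ℚ))^[n] f := by
    intro n hn
    obtain ⟨B, hB⟩ := exists_B f Q hQ0 n
    refine ⟨Qy ^ (2*(d-n)) * B, ?_⟩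
    rw [map_mul, map_pow, ← hgdef, ← hB, ← mul_assoc, ← pow_add]
    congr 2
    omega
  choose E hE using fun (i : Fin (d+1)) => hEex i (Nat.lt_succ_iff.mp i.2)
  -- linear algebra over K = RatFunc ℚ
  set K := RatFunc ℚ with hKdef
  set ι := algebraMap (Polynomial ℚ) K with hιdef
  have hιinj : Function.Injective ι := IsFractionRing.injective _ _
  set Q' := Q.map ι with hQ'def
  have hQ'ne : Q' ≠ 0 := by
    intro h
    exact hQne (Polynomial.map_injective ι hιinj (by rw [Polynomial.map_zero, ← hQ'def]; exact h))
  set A := AdjoinRoot Q' with hAdef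
  haveI : Module.Finite K A := Module.Finite.of_basis (AdjoinRoot.powerBasis hQ'ne).basis
  have hfr : Module.finrank K A = d := by
    rw [(AdjoinRoot.powerBasis hQ'ne).finrank, AdjoinRoot.powerBasis_dim, hQ'def,
      Polynomial.natDegree_map_eq_of_injective hιinj]
  set v : Fin (d+1) → A := fun i => AdjoinRoot.mk Q' ((E i).map ι) with hvdef
  have hdep : ¬ LinearIndependent K v := by
    intro h
    have := h.fintype_card_le_finrank
    rw [hfr, Fintype.card_fin] at this
    omega
  obtain ⟨c, hcsum, i₀, hci₀⟩ := Fintype.not_linearIndependent_iff.mp hdep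
  obtain ⟨b, hb⟩ := IsLocalization.exist_integer_multiples_of_finite
    (nonZeroDivisors (Polynomial ℚ)) c
  choose p hp using fun i => hb i
  have hbne : (b : Polynomial ℚ) ≠ 0 := nonZeroDivisors.coe_ne_zero b
  have hpi₀ : p i₀ ≠ 0 := by
    intro h
    apply hci₀
    have := hp i₀
    rw [h, map_zero, Algebra.smul_def] at this
    rcases mul_eq_zero.mp this.symm with h1 | h1
    · exact absurd h1 ((map_ne_zero_iff ι hιinj).mpr hbne)
    · exact h1
  -- the combined polynomial S
  set S : Polynomial (Polynomial ℚ) := ∑ i, Polynomial.C (p i) * E i with hSdef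
  have hmkS : AdjoinRoot.mk Q' (S.map ι) = 0 := by
    have : (S.map ι) = ∑ i, Polynomial.C (ι (p i)) * (E i).map ι := by
      rw [hSdef, Polynomial.map_sum]
      exact Finset.sum_congr rfl fun i _ => by rw [Polynomial.map_mul, Polynomial.map_C]
    rw [this, map_sum]
    have : ∀ i : Fin (d+1), AdjoinRoot.mk Q' (Polynomial.C (ι (p i)) * (E i).map ι)
        = ι (p i) • v i := by
      intro i
      rw [hvdef]
      rw [AdjoinRoot.smul_mk, Polynomial.smul_eq_C_mul]
    rw [Finset.sum_congr rfl fun i _ => this i]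
    have : ∀ i : Fin (d+1), ι (p i) • v i = (b : Polynomial ℚ) • (c i • v i) := by
      intro i
      rw [hp i, smul_assoc]
    rw [Finset.sum_congr rfl fun i _ => this i, ← Finset.smul_sum, hcsum, smul_zero]
  obtain ⟨Ar, hAr⟩ := AdjoinRoot.mk_eq_zero.mp hmkS
  obtain ⟨b₂, hb₂⟩ := IsLocalization.integerNormalization_map_to_map
    (nonZeroDivisors (Polynomial ℚ)) Ar
  have hb₂ne : (b₂ : Polynomial ℚ) ≠ 0 := nonZeroDivisors.coe_ne_zero b₂
  set A₂ := IsLocalization.integerNormalization (nonZeroDivisors (Polynomial ℚ)) Ar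
  have hkey : Polynomial.C (b₂ : Polynomial ℚ) * S = Q * A₂ := by
    apply Polynomial.map_injective ι hιinj
    rw [Polynomial.map_mul, Polynomial.map_mul, Polynomial.map_C, hb₂, hAr]
    rw [← algebraMap_smul K (b₂ : Polynomial ℚ) Ar, Polynomial.smul_eq_C_mul, ← hQ'def, ← hιdef]
    ring
  have hS0 : evf f S = 0 := by
    have h5 : evf f (Polynomial.C (b₂ : Polynomial ℚ) * S) = 0 := by
      rw [hkey, map_mul, hQ0, zero_mul]
    rw [map_mul, evf_C] at h5
    rcases mul_eq_zero.mp h5 with h6 | h6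
    · exact absurd (Polynomial.coe_eq_zero_iff.mp h6) hb₂ne
    · exact h6
  have hsum0 : ∑ i : Fin (d+1), ((p i : PowerSeries ℚ)) * ((⇑(derivative ℚ))^[(i:ℕ)] f) = 0 := by
    have h7 : evf f S
        = g^(2*d) * ∑ i : Fin (d+1), ((p i : PowerSeries ℚ)) * ((⇑(derivative ℚ))^[(i:ℕ)] f) := by
      rw [hSdef, map_sum, Finset.mul_sum]
      refine Finset.sum_congr rfl fun i _ => ?_
      rw [map_mul, evf_C, hE i]
      ring
    rw [hS0] at h7
    rcases mul_eq_zero.mp h7.symm with h8 | h8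
    · exact absurd h8 (pow_ne_zero _ hgne)
    · exact h8
  -- extract top nonzero coefficient
  set pp : ℕ → Polynomial ℚ := fun i => if h : i < d+1 then p ⟨i, h⟩ else 0 with hppdef
  have hppi₀ : pp i₀ ≠ 0 := by
    rw [hppdef]
    simp only [i₀.2, dif_pos, Fin.eta]; exact hpi₀
  set s := Nat.findGreatest (fun i => pp i ≠ 0) d with hsdef
  have hs_ne : pp s ≠ 0 := Nat.findGreatest_spec (P := fun i => pp i ≠ 0) (Nat.lt_succ_iff.mp i₀.2) hppi₀
  have hs_le : s ≤ d := Nat.findGreatest_le d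
  have hs_gt : ∀ j, s < j → j ≤ d → pp j = 0 := by
    intro j h1 h2
    by_contra h3
    exact Nat.findGreatest_is_greatest h1 h2 h3
  refine ⟨s, pp, hs_ne, ?_⟩
  have hfull : ∑ i ∈ Finset.range (d + 1), ((pp i : PowerSeries ℚ)) * ((⇑(derivative ℚ))^[i] f)
      = 0 := by
    rw [Finset.sum_range fun i => ((pp i : PowerSeries ℚ)) * ((⇑(derivative ℚ))^[i] f)]
    rw [← hsum0]
    refine Finset.sum_congr rfl fun i _ => ?_
    congr 1
    rw [hppdef]
    simp [i.2]
  rw [← hfull]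
  apply Finset.sum_subset
  · exact Finset.range_subset_range.mpr (Nat.succ_le_succ hs_le)
  · intro i hi hni
    rw [Finset.mem_range] at hi
    rw [Finset.mem_range, not_lt] at hni
    rw [hs_gt i (by omega) (by omega)]
    simp
end
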